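/- arXiv:1111.1950 — 4 statements merged into one kernel-verified Lean document; each statement's English description precedes it below -/
import Mathlib

section
/- For every real μ with 0 < μ < 1 and every real c > 0, the improper integral lim_{R→∞} ∫₀^R ξ^{μ−1}·cos(cξ) dξ exists and equals Γ(μ)·cos(πμ/2)·c^{−μ}. -/
/-!
For `t > 0`, `t ^ (μ - 1) = Γ(1 - μ)⁻¹ ∫₀^∞ s ^ (-μ) e^{-st} ds`, so Fubini on `(0, R] × (0, ∞)`
turns `∫₀^R t ^ (μ - 1) cos (ct) dt` into `Γ(1 - μ)⁻¹ ∫₀^∞ s ^ (-μ) ∫₀^R e^{-st} cos (ct) dt ds`.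
The inner integral is elementary: it is bounded by `(2s + c)/(s² + c²)` uniformly in `R ≥ 0`
and tends to `s/(s² + c²)`, so by dominated convergence the limit is
`Γ(1 - μ)⁻¹ ∫₀^∞ s ^ (1 - μ)/(s² + c²) ds`. Writing `1/(s² + c²) = ∫₀^∞ e^{-(s² + c²)y} dy`
and integrating in `s` first gives a product of two Gamma values, which the reflection formula
turns into `π c^(-μ) / (2 sin (πμ/2))`; the reflection formula at `μ` then yields
`Γ(μ) cos (πμ/2) c^(-μ)`.
-/

open Real Filter intervalIntegral
open MeasureTheory Set Topology

lemma integral_rpow_neg_mul_exp_neg_mul_Ioi {ν t : ℝ} (hν : ν < 1) (ht : 0 < t) :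
    ∫ s in Ioi (0 : ℝ), s ^ (-ν) * rexp (-(s * t)) = Gamma (1 - ν) * t ^ (ν - 1) := by
  simp_rw [mul_comm _ t]
  rw [← sub_sub_cancel_left 1 ν, integral_rpow_mul_exp_neg_mul_Ioi (by linarith) ht, one_div,
    inv_rpow ht.le, ← rpow_neg ht.le, neg_sub, mul_comm]

lemma integrable_rpow_neg_mul_exp_neg_mul_mul_prod {μ R : ℝ} {g : ℝ → ℝ} (hμ0 : 0 < μ)
    (hμ1 : μ < 1) (hg : Continuous g) :
    Integrable (Function.uncurry fun t s : ℝ => s ^ (-μ) * rexp (-(s * t)) * g t)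
      ((volume.restrict (Ioc 0 R)).prod (volume.restrict (Ioi 0))) := by
  have hmeas :
      Measurable (Function.uncurry fun t s : ℝ => s ^ (-μ) * rexp (-(s * t)) * g t) := by
    have := hg.measurable
    fun_prop
  refine (integrable_prod_iff hmeas.aestronglyMeasurable).2 ⟨?_, ?_⟩
  · refine ae_restrict_of_forall_mem measurableSet_Ioc fun t ht => ?_
    have := (integrableOn_rpow_mul_exp_neg_mul_rpow (p := 1) (by linarith : -1 < -μ) one_pos
      ht.1).mul_const (g t)
    simpa only [Function.uncurry_apply_pair, rpow_one, neg_mul, mul_comm t] using this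
  · have hdom : IntegrableOn (fun t : ℝ => Gamma (1 - μ) * t ^ (μ - 1) * |g t|) (Ioc 0 R) :=
      (((intervalIntegrable_rpow' (by linarith)).const_mul _).mul_continuousOn
        hg.abs.continuousOn).1
    refine hdom.congr_fun (fun t ht => ?_) measurableSet_Ioc
    simp only [Function.uncurry_apply_pair, norm_mul, norm_eq_abs, abs_of_pos (exp_pos _)]
    rw [MeasureTheory.integral_mul_const, ← integral_rpow_neg_mul_exp_neg_mul_Ioi hμ1 ht.1]
    refine congrArg (· * |g t|) (setIntegral_congr_fun measurableSet_Ioi fun s hs => ?_)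
    exact congrArg (· * _) (abs_of_pos (rpow_pos_of_pos hs _)).symm

lemma intervalIntegral_rpow_mul_eq_integral_rpow_neg_mul_intervalIntegral {μ R : ℝ}
    {g : ℝ → ℝ} (hμ0 : 0 < μ) (hμ1 : μ < 1) (hR : 0 ≤ R) (hg : Continuous g) :
    ∫ t in (0 : ℝ)..R, t ^ (μ - 1) * g t
      = (Gamma (1 - μ))⁻¹ *
          ∫ s in Ioi (0 : ℝ), s ^ (-μ) * ∫ t in (0 : ℝ)..R, rexp (-(s * t)) * g t := by
  have hG : 0 < Gamma (1 - μ) := Gamma_pos_of_pos (by linarith)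
  calc ∫ t in (0 : ℝ)..R, t ^ (μ - 1) * g t
      = ∫ t in Ioc (0 : ℝ) R, t ^ (μ - 1) * g t := integral_of_le hR
    _ = ∫ t in Ioc (0 : ℝ) R, (Gamma (1 - μ))⁻¹ *
          ∫ s in Ioi (0 : ℝ), s ^ (-μ) * rexp (-(s * t)) * g t :=
        setIntegral_congr_fun measurableSet_Ioc fun t ht => by
          rw [MeasureTheory.integral_mul_const, integral_rpow_neg_mul_exp_neg_mul_Ioi hμ1 ht.1]
          field_simp
    _ = (Gamma (1 - μ))⁻¹ *
          ∫ s in Ioi (0 : ℝ), ∫ t in Ioc (0 : ℝ) R, s ^ (-μ) * rexp (-(s * t)) * g t := by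
        rw [MeasureTheory.integral_const_mul,
          integral_integral_swap (integrable_rpow_neg_mul_exp_neg_mul_mul_prod hμ0 hμ1 hg)]
    _ = _ := by
        congr 1
        refine setIntegral_congr_fun measurableSet_Ioi fun s _ => ?_
        simp only [integral_of_le hR, mul_assoc, MeasureTheory.integral_const_mul]

lemma abs_mul_sin_sub_mul_cos_le (a b x : ℝ) : |a * sin x - b * cos x| ≤ |a| + |b| :=
  (abs_sub _ _).trans <| by
    rw [abs_mul, abs_mul]
    gcongr
    · exact mul_le_of_le_one_right (abs_nonneg a) (abs_sin_le_one x)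
    · exact mul_le_of_le_one_right (abs_nonneg b) (abs_cos_le_one x)

lemma integral_exp_neg_mul_mul_cos {s c : ℝ} (h : s ^ 2 + c ^ 2 ≠ 0) (R : ℝ) :
    ∫ t in (0 : ℝ)..R, rexp (-(s * t)) * cos (c * t)
      = (rexp (-(s * R)) * (c * sin (c * R) - s * cos (c * R)) + s) / (s ^ 2 + c ^ 2) := by
  have hderiv : ∀ t, HasDerivAt
      (fun t => rexp (-(s * t)) * (c * sin (c * t) - s * cos (c * t)) / (s ^ 2 + c ^ 2))
      (rexp (-(s * t)) * cos (c * t)) t := by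
    intro t
    have hlin (k : ℝ) : HasDerivAt (fun t : ℝ => k * t) k t := by
      simpa using (hasDerivAt_id t).const_mul k
    refine (((hlin s).neg.exp.mul (((hlin c).sin.const_mul c).sub
      ((hlin c).cos.const_mul s))).div_const (s ^ 2 + c ^ 2)).congr_deriv ?_
    simp only [Pi.neg_apply, Pi.sub_apply]
    field_simp
    ring
  rw [integral_eq_sub_of_hasDerivAt (fun t _ => hderiv t)
    ((by fun_prop : Continuous fun t => rexp (-(s * t)) * cos (c * t)).intervalIntegrable _ _)]
  simp only [mul_zero, neg_zero, exp_zero, sin_zero, cos_zero]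
  ring

lemma abs_integral_exp_neg_mul_mul_cos_le {s c R : ℝ} (hs : 0 < s) (hR : 0 ≤ R) :
    |∫ t in (0 : ℝ)..R, rexp (-(s * t)) * cos (c * t)| ≤ (2 * s + |c|) / (s ^ 2 + c ^ 2) := by
  have hpos : 0 < s ^ 2 + c ^ 2 := by positivity
  rw [integral_exp_neg_mul_mul_cos hpos.ne', abs_div, abs_of_pos hpos]
  gcongr
  have hexp : rexp (-(s * R)) ≤ 1 := exp_le_one_iff.2 (neg_nonpos.2 (mul_nonneg hs.le hR))
  calc |rexp (-(s * R)) * (c * sin (c * R) - s * cos (c * R)) + s|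
      ≤ rexp (-(s * R)) * (|c| + |s|) + |s| := by
        refine (abs_add_le _ _).trans ?_
        rw [abs_mul, abs_of_pos (exp_pos _)]
        gcongr
        exact abs_mul_sin_sub_mul_cos_le _ _ _
    _ ≤ 1 * (|c| + |s|) + |s| := by gcongr
    _ = 2 * s + |c| := by rw [abs_of_pos hs]; ring

lemma tendsto_integral_exp_neg_mul_mul_cos {s : ℝ} (hs : 0 < s) (c : ℝ) :
    Tendsto (fun R => ∫ t in (0 : ℝ)..R, rexp (-(s * t)) * cos (c * t)) atTop
      (𝓝 (s / (s ^ 2 + c ^ 2))) := by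
  simp_rw [integral_exp_neg_mul_mul_cos (by positivity : s ^ 2 + c ^ 2 ≠ 0)]
  have hdecay : Tendsto (fun R => rexp (-(s * R))) atTop (𝓝 0) :=
    tendsto_exp_neg_atTop_nhds_zero.comp (tendsto_id.const_mul_atTop hs)
  have hosc : IsBoundedUnder (· ≤ ·) atTop
      (fun R => ‖c * sin (c * R) - s * cos (c * R)‖) :=
    isBoundedUnder_of ⟨|c| + |s|, fun R => abs_mul_sin_sub_mul_cos_le _ _ _⟩
  simpa using ((hdecay.zero_mul_isBoundedUnder_le hosc).add_const s).div_const (s ^ 2 + c ^ 2)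

lemma integrableOn_rpow_div_sq_add_sq {a c : ℝ} (ha : -1 < a) (ha' : a < 1) (hc : c ≠ 0) :
    IntegrableOn (fun s : ℝ => s ^ a / (s ^ 2 + c ^ 2)) (Ioi 0) := by
  have hmeas (S : Set ℝ) : AEStronglyMeasurable (fun s : ℝ => s ^ a / (s ^ 2 + c ^ 2))
      (volume.restrict S) :=
    (by fun_prop : Measurable fun s : ℝ => s ^ a / (s ^ 2 + c ^ 2)).aestronglyMeasurable
  rw [← Ioc_union_Ioi_eq_Ioi zero_le_one]
  refine IntegrableOn.union ?_ ?_
  · have hdom : IntegrableOn (fun s : ℝ => s ^ a / c ^ 2) (Ioc 0 1) :=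
      (intervalIntegrable_iff_integrableOn_Ioc_of_le zero_le_one).1
        ((intervalIntegrable_rpow' ha).div_const _)
    refine hdom.mono' (hmeas _) (ae_restrict_of_forall_mem measurableSet_Ioc fun s hs => ?_)
    have hs0 : 0 < s := hs.1
    rw [norm_of_nonneg (by positivity)]
    gcongr
    exact le_add_of_nonneg_left (sq_nonneg s)
  · have hdom := integrableOn_Ioi_rpow_of_lt (show a - 2 < -1 by linarith) one_pos
    refine hdom.mono' (hmeas _) (ae_restrict_of_forall_mem measurableSet_Ioi fun s hs => ?_)
    have hs0 : 0 < s := one_pos.trans hs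
    rw [norm_of_nonneg (by positivity), rpow_sub hs0, rpow_two]
    gcongr
    exact le_add_of_nonneg_right (sq_nonneg c)

lemma integral_mul_exp_neg_mul_Ioi {b : ℝ} (hb : 0 < b) (k : ℝ) :
    ∫ y in Ioi (0 : ℝ), k * rexp (-(b * y)) = k / b := by
  rw [MeasureTheory.integral_const_mul, div_eq_mul_one_div]
  congr 1
  simpa using integral_rpow_mul_exp_neg_mul_Ioi one_pos hb

lemma integrable_rpow_mul_exp_neg_sq_add_sq_mul_prod {a c : ℝ} (ha : -1 < a) (ha' : a < 1)
    (hc : c ≠ 0) :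
    Integrable (Function.uncurry fun s y : ℝ => s ^ a * rexp (-((s ^ 2 + c ^ 2) * y)))
      ((volume.restrict (Ioi 0)).prod (volume.restrict (Ioi 0))) := by
  have hmeas :
      Measurable (Function.uncurry fun s y : ℝ => s ^ a * rexp (-((s ^ 2 + c ^ 2) * y))) := by
    fun_prop
  refine (integrable_prod_iff hmeas.aestronglyMeasurable).2
    ⟨Eventually.of_forall fun s => ?_, ?_⟩
  · simpa only [Function.uncurry_apply_pair, neg_mul] using
      (exp_neg_integrableOn_Ioi 0 (by positivity : 0 < s ^ 2 + c ^ 2)).const_mul (s ^ a)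
  · refine (integrableOn_rpow_div_sq_add_sq ha ha' hc).congr_fun (fun s hs => ?_) measurableSet_Ioi
    have hs : 0 < s := hs
    dsimp only
    rw [← integral_mul_exp_neg_mul_Ioi (by positivity : 0 < s ^ 2 + c ^ 2)]
    exact setIntegral_congr_fun measurableSet_Ioi fun y _ => (norm_of_nonneg (by positivity)).symm

lemma integral_rpow_div_sq_add_sq_eq_Gamma_mul_Gamma {a c : ℝ} (ha : -1 < a) (ha' : a < 1)
    (hc : 0 < c) :
    ∫ s in Ioi (0 : ℝ), s ^ a / (s ^ 2 + c ^ 2)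
      = Gamma ((a + 1) / 2) * Gamma ((1 - a) / 2) / 2 * c ^ (a - 1) := by
  have hpow : (1 / c ^ 2) ^ ((1 - a) / 2) = c ^ (a - 1) := by
    rw [one_div, inv_rpow (by positivity), ← rpow_neg (by positivity), ← rpow_natCast,
      ← rpow_mul hc.le]
    push_cast
    ring_nf
  calc ∫ s in Ioi (0 : ℝ), s ^ a / (s ^ 2 + c ^ 2)
      = ∫ s in Ioi (0 : ℝ), ∫ y in Ioi (0 : ℝ), s ^ a * rexp (-((s ^ 2 + c ^ 2) * y)) := by
        refine setIntegral_congr_fun measurableSet_Ioi fun s _ => ?_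
        rw [integral_mul_exp_neg_mul_Ioi (by positivity : 0 < s ^ 2 + c ^ 2)]
    _ = ∫ y in Ioi (0 : ℝ), ∫ s in Ioi (0 : ℝ), s ^ a * rexp (-((s ^ 2 + c ^ 2) * y)) :=
        integral_integral_swap (integrable_rpow_mul_exp_neg_sq_add_sq_mul_prod ha ha' hc.ne')
    _ = ∫ y in Ioi (0 : ℝ), Gamma ((a + 1) / 2) / 2 *
          (y ^ ((1 - a) / 2 - 1) * rexp (-(c ^ 2 * y))) := by
        refine setIntegral_congr_fun measurableSet_Ioi fun y hy => ?_
        have hgauss := integral_rpow_mul_exp_neg_mul_rpow two_pos ha hy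
        simp_rw [rpow_two] at hgauss
        calc ∫ s in Ioi (0 : ℝ), s ^ a * rexp (-((s ^ 2 + c ^ 2) * y))
            = ∫ s in Ioi (0 : ℝ), rexp (-(c ^ 2 * y)) * (s ^ a * rexp (-y * s ^ 2)) :=
              setIntegral_congr_fun measurableSet_Ioi fun s _ => by
                rw [mul_left_comm, ← exp_add]
                ring_nf
          _ = _ := by
              rw [MeasureTheory.integral_const_mul, hgauss,
                show -(a + 1) / 2 = (1 - a) / 2 - 1 by ring]
              ring
    _ = Gamma ((a + 1) / 2) * Gamma ((1 - a) / 2) / 2 * c ^ (a - 1) := by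
        rw [MeasureTheory.integral_const_mul,
          integral_rpow_mul_exp_neg_mul_Ioi (by linarith) (by positivity), hpow]
        ring

lemma integral_rpow_div_sq_add_sq {a c : ℝ} (ha : -1 < a) (ha' : a < 1) (hc : 0 < c) :
    ∫ s in Ioi (0 : ℝ), s ^ a / (s ^ 2 + c ^ 2)
      = π * c ^ (a - 1) / (2 * cos (π * a / 2)) := by
  have hreflect := Gamma_mul_Gamma_one_sub ((a + 1) / 2)
  rw [show 1 - (a + 1) / 2 = (1 - a) / 2 by ring,
    show π * ((a + 1) / 2) = π * a / 2 + π / 2 by ring, sin_add_pi_div_two] at hreflect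
  rw [integral_rpow_div_sq_add_sq_eq_Gamma_mul_Gamma ha ha' hc, hreflect]
  ring

lemma tendsto_integral_rpow_neg_mul_integral_exp_neg_mul_cos {μ c : ℝ} (hμ0 : 0 < μ)
    (hμ1 : μ < 1) (hc : c ≠ 0) :
    Tendsto (fun R =>
        ∫ s in Ioi (0 : ℝ), s ^ (-μ) * ∫ t in (0 : ℝ)..R, rexp (-(s * t)) * cos (c * t))
      atTop (𝓝 (∫ s in Ioi (0 : ℝ), s ^ (1 - μ) / (s ^ 2 + c ^ 2))) := by
  have hrpow {s : ℝ} (hs : 0 < s) : s ^ (-μ) * s = s ^ (1 - μ) := by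
    rw [← rpow_add_one hs.ne', neg_add_eq_sub]
  refine tendsto_integral_filter_of_dominated_convergence
    (fun s => 2 * (s ^ (1 - μ) / (s ^ 2 + c ^ 2)) + |c| * (s ^ (-μ) / (s ^ 2 + c ^ 2)))
    (Eventually.of_forall fun R => ?_) ?_ ?_ ?_
  · have hinner : Continuous fun s => ∫ t in (0 : ℝ)..R, rexp (-(s * t)) * cos (c * t) :=
      continuous_parametric_intervalIntegral_of_continuous' (by fun_prop) 0 R
    exact ((measurable_id.pow_const _).mul hinner.measurable).aestronglyMeasurable
  · filter_upwards [eventually_ge_atTop 0] with R hR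
    refine ae_restrict_of_forall_mem measurableSet_Ioi fun s hs => ?_
    have hs : 0 < s := hs
    calc ‖s ^ (-μ) * ∫ t in (0 : ℝ)..R, rexp (-(s * t)) * cos (c * t)‖
        = s ^ (-μ) * |∫ t in (0 : ℝ)..R, rexp (-(s * t)) * cos (c * t)| := by
          rw [norm_mul, norm_of_nonneg (by positivity), norm_eq_abs]
      _ ≤ s ^ (-μ) * ((2 * s + |c|) / (s ^ 2 + c ^ 2)) := by
          gcongr
          exact abs_integral_exp_neg_mul_mul_cos_le hs hR
      _ = _ := by rw [← hrpow hs]; ring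
  · exact ((integrableOn_rpow_div_sq_add_sq (by linarith) (by linarith) hc).const_mul 2).add
      ((integrableOn_rpow_div_sq_add_sq (by linarith) (by linarith) hc).const_mul |c|)
  · refine ae_restrict_of_forall_mem measurableSet_Ioi fun s hs => ?_
    rw [← hrpow hs, mul_div_assoc]
    exact (tendsto_integral_exp_neg_mul_mul_cos hs c).const_mul _

lemma Gamma_mul_cos_pi_mul_div_two {μ : ℝ} (h : sin (π * μ) ≠ 0) :
    Gamma μ * cos (π * μ / 2) = (Gamma (1 - μ))⁻¹ * (π / (2 * sin (π * μ / 2))) := by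
  have hreflect := Gamma_mul_Gamma_one_sub μ
  have hG : Gamma (1 - μ) ≠ 0 := by
    intro h0
    rw [h0, mul_zero, eq_comm, div_eq_zero_iff] at hreflect
    exact hreflect.elim pi_ne_zero h
  rw [show π * μ = 2 * (π * μ / 2) by ring, sin_two_mul] at h hreflect
  rw [eq_div_iff h] at hreflect
  have hs : sin (π * μ / 2) ≠ 0 := right_ne_zero_of_mul (left_ne_zero_of_mul h)
  field_simp
  linear_combination hreflect

/-- For `0 < μ < 1` and `c > 0`, `lim_{R→∞} ∫₀^R ξ^(μ-1) cos (cξ) dξ = Γ(μ) cos (πμ/2) c^(-μ)`. -/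
theorem mellin_cos (μ c : ℝ) (hμ0 : 0 < μ) (hμ1 : μ < 1) (hc : 0 < c) :
    Tendsto (fun R : ℝ => ∫ ξ in (0:ℝ)..R, ξ ^ (μ - 1) * Real.cos (c * ξ)) atTop
      (nhds (Real.Gamma μ * Real.cos (π * μ / 2) * c ^ (-μ))) := by
  have hsin : sin (π * μ) ≠ 0 :=
    (sin_pos_of_pos_of_lt_pi (by positivity) (by nlinarith [pi_pos])).ne'
  have hlimit : (Gamma (1 - μ))⁻¹ * ∫ s in Ioi (0 : ℝ), s ^ (1 - μ) / (s ^ 2 + c ^ 2)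
      = Gamma μ * cos (π * μ / 2) * c ^ (-μ) := by
    rw [integral_rpow_div_sq_add_sq (by linarith) (by linarith) hc,
      Gamma_mul_cos_pi_mul_div_two hsin, show π * (1 - μ) / 2 = π / 2 - π * μ / 2 by ring,
      cos_pi_div_two_sub, sub_sub_cancel_left]
    ring
  rw [← hlimit]
  refine ((tendsto_integral_rpow_neg_mul_integral_exp_neg_mul_cos hμ0 hμ1 hc.ne').const_mul
    _).congr' ?_
  filter_upwards [eventually_ge_atTop 0] with R hR
  exact (intervalIntegral_rpow_mul_eq_integral_rpow_neg_mul_intervalIntegral hμ0 hμ1 hR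
    (by fun_prop)).symm
end

section
/- For every real μ with 0 < μ < 1 and every real z₀ > 0, the complex-valued expression (e^{iπμ/2}/(2Γ(μ)))·[(1 − e^{iπ(μ−1)})·∫₀^R ξ^{μ−1} cos(z₀ξ) dξ + i·(1 + e^{iπ(μ−1)})·∫₀^R ξ^{μ−1} sin(z₀ξ) dξ] converges, as R→∞, to e^{iπμ}·z₀^{−μ}. (This is the statement that f(z) = z satisfies the generalised root identity at z₀ for μ ∈ (0,1): the μ-th fractional derivative side equals the root side e^{iπμ}/z₀^μ.) -/
/-!
The two integrals are the real and imaginary parts of `∫₀^R t^(μ-1) e^{i z₀ t} dt`, whose limit is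
the Laplace transform `∫₀^∞ t^(μ-1) e^{ct} dt = Γ(μ) (-c)^(-μ)` evaluated on the boundary
point `c = i z₀` of its half-plane of convergence `re c < 0`. Inside the half-plane the formula
holds because `(-c)^μ` times the transform has vanishing derivative; integrating by parts once on
`[1, ∞)` turns the transform into an expression that is continuous up to `re c = 0`, which
carries the formula to `c = i z₀`. There `(-i z₀)^(-μ) = z₀^(-μ) e^{iπμ/2}`, and since
`e^{iπ(μ-1)} = -e^{iπμ}`, the given combination of cosine and sine integrals tends to
`e^{iπμ} z₀^(-μ)`.
-/

open Real Filter intervalIntegral Complex MeasureTheory Set Topology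

lemma norm_rpow_mul_cexp (p : ℝ) (c : ℂ) {t : ℝ} (ht : 0 ≤ t) :
    ‖((t ^ p : ℝ) : ℂ) * cexp (c * t)‖ = t ^ p * Real.exp (c.re * t) := by
  rw [norm_mul, norm_real, norm_of_nonneg (rpow_nonneg ht p), norm_exp, re_mul_ofReal]

lemma continuousOn_rpow_mul_cexp (p : ℝ) (c : ℂ) :
    ContinuousOn (fun t : ℝ => ((t ^ p : ℝ) : ℂ) * cexp (c * t)) (Ioi 0) :=
  (continuous_ofReal.comp_continuousOn fun t ht => (continuousAt_rpow_const t p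
    (.inl (ne_of_gt ht))).continuousWithinAt).mul (by fun_prop)

lemma integrableOn_rpow_mul_cexp_Ioi_zero {p : ℝ} (hp : -1 < p) {c : ℂ} (hc : c.re < 0) :
    IntegrableOn (fun t : ℝ => ((t ^ p : ℝ) : ℂ) * cexp (c * t)) (Ioi 0) := by
  have hbound : IntegrableOn (fun t : ℝ => t ^ p * Real.exp (c.re * t)) (Ioi 0) := by
    simpa [rpow_one] using integrableOn_rpow_mul_exp_neg_mul_rpow hp one_pos (neg_pos.2 hc)
  refine hbound.mono' ((continuousOn_rpow_mul_cexp p c).aestronglyMeasurable measurableSet_Ioi) ?_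
  filter_upwards [ae_restrict_mem measurableSet_Ioi] with t ht
  exact (norm_rpow_mul_cexp p c (le_of_lt ht)).le

lemma integrableOn_rpow_mul_cexp_Ioi_one {p : ℝ} (hp : p < -1) {c : ℂ} (hc : c.re ≤ 0) :
    IntegrableOn (fun t : ℝ => ((t ^ p : ℝ) : ℂ) * cexp (c * t)) (Ioi 1) := by
  refine (integrableOn_Ioi_rpow_of_lt hp one_pos).mono'
    (((continuousOn_rpow_mul_cexp p c).mono (Ioi_subset_Ioi zero_le_one)).aestronglyMeasurable
      measurableSet_Ioi) ?_
  filter_upwards [ae_restrict_mem measurableSet_Ioi] with t (ht : 1 < t)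
  rw [norm_rpow_mul_cexp p c (by linarith)]
  exact mul_le_of_le_one_right (rpow_nonneg (by linarith) p)
    (exp_le_one_iff.2 (mul_nonpos_of_nonpos_of_nonneg hc (by linarith)))

lemma intervalIntegrable_rpow_mul_cexp {p : ℝ} (hp : -1 < p) (c : ℂ) (a b : ℝ) :
    IntervalIntegrable (fun t : ℝ => ((t ^ p : ℝ) : ℂ) * cexp (c * t)) volume a b := by
  have hpow : IntervalIntegrable (fun t : ℝ => ((t ^ p : ℝ) : ℂ)) volume a b :=
    intervalIntegrable_iff.2 (intervalIntegrable_iff.1 (intervalIntegrable_rpow' hp)).ofReal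
  exact hpow.mul_continuousOn (by fun_prop)

lemma hasDerivAt_rpow_mul_cexp (p : ℝ) (c : ℂ) {t : ℝ} (ht : 0 < t) :
    HasDerivAt (fun t : ℝ => ((t ^ p : ℝ) : ℂ) * cexp (c * t))
      (p * (((t ^ (p - 1) : ℝ) : ℂ) * cexp (c * t)) + c * (((t ^ p : ℝ) : ℂ) * cexp (c * t)))
      t := by
  have hpow := (hasDerivAt_rpow_const (p := p) (.inl (ne_of_gt ht))).ofReal_comp
  have hexp := ((hasDerivAt_id (t : ℂ)).comp_ofReal.const_mul c).cexp
  exact (hpow.mul hexp).congr_deriv (by simp only [id, mul_one]; push_cast; ring)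

lemma mul_integral_rpow_mul_cexp_Ioi {s : ℝ} (hs : 0 < s) {c : ℂ} (hc : c.re < 0) :
    c * ∫ t in Ioi (0 : ℝ), ((t ^ s : ℝ) : ℂ) * cexp (c * t) =
      -s * ∫ t in Ioi (0 : ℝ), ((t ^ (s - 1) : ℝ) : ℂ) * cexp (c * t) := by
  have hint₁ := integrableOn_rpow_mul_cexp_Ioi_zero (p := s - 1) (by linarith) hc
  have hint₂ := integrableOn_rpow_mul_cexp_Ioi_zero (p := s) (by linarith) hc
  have hcont : ContinuousWithinAt (fun t : ℝ => ((t ^ s : ℝ) : ℂ) * cexp (c * t)) (Ici 0) 0 :=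
    ((continuous_ofReal.continuousAt.comp (continuousAt_rpow_const 0 s (.inr hs.le))).mul
      (by fun_prop)).continuousWithinAt
  have hdecay : Tendsto (fun t : ℝ => ((t ^ s : ℝ) : ℂ) * cexp (c * t)) atTop (𝓝 0) := by
    refine tendsto_zero_iff_norm_tendsto_zero.2 <|
      (tendsto_rpow_mul_exp_neg_mul_atTop_nhds_zero s (-c.re) (by linarith)).congr' ?_
    filter_upwards [eventually_ge_atTop 0] with t ht
    rw [norm_rpow_mul_cexp s c ht, neg_neg]
  have hibp := integral_Ioi_of_hasDerivAt_of_tendsto hcont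
    (fun t ht => hasDerivAt_rpow_mul_cexp s c ht)
    ((hint₁.const_mul (s : ℂ)).add (hint₂.const_mul c)) hdecay
  rw [integral_add (hint₁.const_mul _) (hint₂.const_mul _), MeasureTheory.integral_const_mul,
    MeasureTheory.integral_const_mul, ofReal_zero, zero_rpow hs.ne', ofReal_zero, zero_mul,
    sub_zero] at hibp
  linear_combination hibp

lemma hasDerivAt_integral_rpow_mul_cexp {s : ℝ} (hs : 0 < s) {c : ℂ} (hc : c.re < 0) :
    HasDerivAt (fun c : ℂ => ∫ t in Ioi (0 : ℝ), ((t ^ (s - 1) : ℝ) : ℂ) * cexp (c * t))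
      (∫ t in Ioi (0 : ℝ), ((t ^ s : ℝ) : ℂ) * cexp (c * t)) c := by
  have hr : 0 < -c.re / 2 := by linarith
  have hball {x : ℂ} (hx : x ∈ Metric.ball c (-c.re / 2)) : x.re < (c / 2).re := by
    have := (abs_re_le_norm (x - c)).trans_lt (mem_ball_iff_norm.1 hx)
    rw [sub_re, abs_lt] at this
    rw [div_ofNat_re]
    linarith
  refine (hasDerivAt_integral_of_dominated_loc_of_deriv_le
    (F := fun x t => ((t ^ (s - 1) : ℝ) : ℂ) * cexp (x * t))
    (F' := fun x t => ((t ^ s : ℝ) : ℂ) * cexp (x * t)) (Metric.ball_mem_nhds c hr)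
    (Eventually.of_forall fun x => (continuousOn_rpow_mul_cexp (s - 1) x).aestronglyMeasurable
      measurableSet_Ioi)
    (integrableOn_rpow_mul_cexp_Ioi_zero (by linarith) hc)
    ((continuousOn_rpow_mul_cexp s c).aestronglyMeasurable measurableSet_Ioi) ?_
    (integrableOn_rpow_mul_cexp_Ioi_zero (p := s) (c := c / 2) (by linarith)
      (by rw [div_ofNat_re]; linarith)).norm ?_).2
  · filter_upwards [ae_restrict_mem measurableSet_Ioi] with t (ht : 0 < t) x hx
    rw [norm_rpow_mul_cexp s x ht.le, norm_rpow_mul_cexp s _ ht.le]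
    gcongr t ^ s * Real.exp (?_ * t)
    exact (hball hx).le
  · filter_upwards [ae_restrict_mem measurableSet_Ioi] with t (ht : 0 < t) x _
    have hexp := ((hasDerivAt_id x).mul_const (t : ℂ)).cexp.const_mul ((t ^ (s - 1) : ℝ) : ℂ)
    refine hexp.congr_deriv ?_
    simp only [id, one_mul]
    rw [rpow_sub_one ht.ne']
    push_cast
    field_simp [ofReal_ne_zero.2 ht.ne']

lemma integral_rpow_mul_cexp_neg_one {s : ℝ} (hs : 0 < s) :
    ∫ t in Ioi (0 : ℝ), ((t ^ (s - 1) : ℝ) : ℂ) * cexp (-1 * t) = Real.Gamma s := by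
  rw [Gamma_eq_integral hs, ← integral_complex_ofReal]
  refine setIntegral_congr_fun measurableSet_Ioi fun t _ => ?_
  push_cast
  ring_nf

theorem integral_rpow_mul_cexp_Ioi {s : ℝ} (hs : 0 < s) {c : ℂ} (hc : c.re < 0) :
    ∫ t in Ioi (0 : ℝ), ((t ^ (s - 1) : ℝ) : ℂ) * cexp (c * t) =
      (-c) ^ (-s : ℂ) * Real.Gamma s := by
  set Φ := fun c : ℂ => ∫ t in Ioi (0 : ℝ), ((t ^ (s - 1) : ℝ) : ℂ) * cexp (c * t)
  set U := {c : ℂ | c.re < 0}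
  have hU : IsOpen U := isOpen_lt continuous_re continuous_const
  have hslit {c : ℂ} (hc : c ∈ U) : -c ∈ slitPlane := .inl (by rw [neg_re]; exact neg_pos.2 hc)
  have hne {c : ℂ} (hc : c ∈ U) : -c ≠ 0 := slitPlane_ne_zero (hslit hc)
  have hderiv {c : ℂ} (hc : c ∈ U) :
      HasDerivAt (fun c => (-c) ^ (s : ℂ) * Φ c) 0 c := by
    have hpow := ((hasStrictDerivAt_cpow_const (c := (s : ℂ)) (hslit hc)).hasDerivAt).comp c
      (hasDerivAt_neg c)
    refine (hpow.mul (hasDerivAt_integral_rpow_mul_cexp hs hc)).congr_deriv ?_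
    have hibp := mul_integral_rpow_mul_cexp_Ioi hs hc
    rw [Function.comp_apply, cpow_sub _ _ (hne hc), cpow_one]
    have hc0 : c ≠ 0 := neg_ne_zero.1 (hne hc)
    field_simp
    linear_combination (-c) ^ (s : ℂ) * hibp
  have hconst : (-c) ^ (s : ℂ) * Φ c = (-(-1)) ^ (s : ℂ) * Φ (-1) :=
    hU.is_const_of_deriv_eq_zero (convex_halfSpace_re_lt 0).isPreconnected
      (fun z hz => (hderiv hz).differentiableAt.differentiableWithinAt)
      (fun z hz => (hderiv hz).deriv) hc (by simp [U])
  have hΦ : Φ (-1) = Real.Gamma s := integral_rpow_mul_cexp_neg_one hs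
  rw [neg_neg, one_cpow, one_mul, hΦ] at hconst
  rw [cpow_neg, ← hconst, inv_mul_cancel_left₀ (cpow_ne_zero_iff.2 (.inl (hne hc)))]

lemma mul_intervalIntegral_rpow_mul_cexp {p : ℝ} (c : ℂ) {R : ℝ} (hR : 1 ≤ R) :
    c * ∫ t in (1 : ℝ)..R, ((t ^ p : ℝ) : ℂ) * cexp (c * t) =
      ((R ^ p : ℝ) : ℂ) * cexp (c * R) - cexp c
        - p * ∫ t in (1 : ℝ)..R, ((t ^ (p - 1) : ℝ) : ℂ) * cexp (c * t) := by
  have hpos : uIcc 1 R ⊆ Ioi (0 : ℝ) := fun t ht => by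
    rw [uIcc_of_le hR] at ht
    exact zero_lt_one.trans_le ht.1
  have hint (q : ℝ) :
      IntervalIntegrable (fun t : ℝ => ((t ^ q : ℝ) : ℂ) * cexp (c * t)) volume 1 R :=
    ((continuousOn_rpow_mul_cexp q c).mono hpos).intervalIntegrable
  have hftc := integral_eq_sub_of_hasDerivAt (fun t ht => hasDerivAt_rpow_mul_cexp p c (hpos ht))
    (((hint (p - 1)).const_mul (p : ℂ)).add ((hint p).const_mul c))
  rw [intervalIntegral.integral_add ((hint _).const_mul _) ((hint _).const_mul _),
    intervalIntegral.integral_const_mul, intervalIntegral.integral_const_mul] at hftc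
  simp only [one_rpow, ofReal_one, one_mul, mul_one] at hftc
  linear_combination hftc

lemma continuousOn_setIntegral_rpow_mul_cexp {p : ℝ} {A : Set ℝ} (hA : MeasurableSet A)
    (hA₀ : A ⊆ Ioi 0) (hint : IntegrableOn (fun t : ℝ => t ^ p) A) :
    ContinuousOn (fun c : ℂ => ∫ t in A, ((t ^ p : ℝ) : ℂ) * cexp (c * t)) {c | c.re ≤ 0} := by
  refine continuousOn_of_dominated
    (fun c _ => ((continuousOn_rpow_mul_cexp p c).mono hA₀).aestronglyMeasurable hA) ?_ hint
    (Eventually.of_forall fun t => (by fun_prop : Continuous _).continuousOn)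
  intro c (hc : c.re ≤ 0)
  filter_upwards [ae_restrict_mem hA] with t ht
  have ht₀ : 0 ≤ t := (hA₀ ht).le
  rw [norm_rpow_mul_cexp p c ht₀]
  exact mul_le_of_le_one_right (rpow_nonneg ht₀ p)
    (exp_le_one_iff.2 (mul_nonpos_of_nonpos_of_nonneg hc ht₀))

/-- The improper integral `∫₀^∞ t ^ (s - 1) e^{ct} dt` after one integration by parts on `[1, ∞)`,
which leaves absolutely convergent integrals even on the line `c.re = 0` when `s < 1`. -/
noncomputable def improperRpowCexpIntegral (s : ℝ) (c : ℂ) : ℂ :=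
  (∫ t in Ioc (0 : ℝ) 1, ((t ^ (s - 1) : ℝ) : ℂ) * cexp (c * t)) - cexp c / c
    - (s - 1) / c * ∫ t in Ioi (1 : ℝ), ((t ^ (s - 2) : ℝ) : ℂ) * cexp (c * t)

lemma tendsto_intervalIntegral_improperRpowCexpIntegral {s : ℝ} (hs₀ : 0 < s) (hs₁ : s < 1)
    {c : ℂ} (hc₀ : c ≠ 0) (hc : c.re ≤ 0) :
    Tendsto (fun R : ℝ => ∫ t in (0 : ℝ)..R, ((t ^ (s - 1) : ℝ) : ℂ) * cexp (c * t)) atTop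
      (𝓝 (improperRpowCexpIntegral s c)) := by
  have hboundary : Tendsto (fun R : ℝ => ((R ^ (s - 1) : ℝ) : ℂ) * cexp (c * R)) atTop (𝓝 0) := by
    refine squeeze_zero_norm' ?_ (tendsto_rpow_neg_atTop (by linarith : 0 < 1 - s))
    filter_upwards [eventually_ge_atTop 0] with R hR
    rw [norm_rpow_mul_cexp _ c hR, neg_sub]
    exact mul_le_of_le_one_right (rpow_nonneg hR _)
      (exp_le_one_iff.2 (mul_nonpos_of_nonpos_of_nonneg hc hR))
  have htail := intervalIntegral_tendsto_integral_Ioi 1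
    (integrableOn_rpow_mul_cexp_Ioi_one (p := s - 2) (by linarith) hc) tendsto_id
  have hrest := ((hboundary.sub_const (cexp c)).sub (htail.const_mul (s - 1 : ℂ))).div_const c
  convert (hrest.const_add (∫ t in Ioc (0 : ℝ) 1, ((t ^ (s - 1) : ℝ) : ℂ) * cexp (c * t))).congr' ?_
    using 2
  · rw [improperRpowCexpIntegral, zero_sub]
    ring
  filter_upwards [eventually_ge_atTop 1] with R hR
  have hibp := mul_intervalIntegral_rpow_mul_cexp (p := s - 1) c hR
  rw [show s - 1 - 1 = s - 2 by ring, ofReal_sub, ofReal_one] at hibp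
  rw [id, ← integral_add_adjacent_intervals (intervalIntegrable_rpow_mul_cexp (by linarith) c 0 1)
    (intervalIntegrable_rpow_mul_cexp (by linarith) c 1 R), integral_of_le zero_le_one, ← hibp,
    mul_div_cancel_left₀ _ hc₀]

lemma continuousOn_improperRpowCexpIntegral {s : ℝ} (hs₀ : 0 < s) (hs₁ : s < 1) :
    ContinuousOn (improperRpowCexpIntegral s) ({c | c.re ≤ 0} \ {0}) := by
  have hhead := continuousOn_setIntegral_rpow_mul_cexp (p := s - 1) measurableSet_Ioc
    Ioc_subset_Ioi_self (intervalIntegrable_iff_integrableOn_Ioc_of_le zero_le_one |>.1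
      (intervalIntegrable_rpow' (by linarith)))
  have htail := continuousOn_setIntegral_rpow_mul_cexp (p := s - 2) measurableSet_Ioi
    (Ioi_subset_Ioi zero_le_one) (integrableOn_Ioi_rpow_of_lt (by linarith) one_pos)
  have hid : ContinuousOn (fun c : ℂ => c) ({c | c.re ≤ 0} \ {0}) := continuousOn_id
  exact ((hhead.mono sdiff_subset).sub (continuous_exp.continuousOn.div hid fun c hc => hc.2)).sub
    ((continuousOn_const.div hid fun c hc => hc.2).mul (htail.mono sdiff_subset))

lemma improperRpowCexpIntegral_eq {s : ℝ} (hs₀ : 0 < s) (hs₁ : s < 1) {c : ℂ} (hc₀ : c ≠ 0)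
    (hc : c.re ≤ 0) : improperRpowCexpIntegral s c = (-c) ^ (-s : ℂ) * Real.Gamma s := by
  have hopen : EqOn (improperRpowCexpIntegral s) (fun c => (-c) ^ (-s : ℂ) * Real.Gamma s)
      {c | c.re < 0} := fun c (hc : c.re < 0) =>
    (tendsto_nhds_unique
      (tendsto_intervalIntegral_improperRpowCexpIntegral hs₀ hs₁ (by rintro rfl; simp at hc) hc.le)
      (intervalIntegral_tendsto_integral_Ioi 0
        (integrableOn_rpow_mul_cexp_Ioi_zero (by linarith) hc) tendsto_id)).trans
      (integral_rpow_mul_cexp_Ioi hs₀ hc)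
  have hslit {c : ℂ} (hc : c ∈ {c : ℂ | c.re ≤ 0} \ {0}) : -c ∈ slitPlane := by
    rcases (show c.re ≤ 0 from hc.1).lt_or_eq with hre | hre
    · exact .inl (by rw [neg_re]; linarith)
    · exact .inr fun him => hc.2 (ext hre (by simpa using him))
  refine hopen.of_subset_closure (continuousOn_improperRpowCexpIntegral hs₀ hs₁)
    (fun c hc => ((continuousAt_cpow_const (hslit hc)).comp continuous_neg.continuousAt
      |>.mul continuousAt_const).continuousWithinAt) ?_ ?_ ⟨hc, hc₀⟩
  · exact fun c (hc : c.re < 0) => ⟨hc.le, by rintro rfl; simp at hc⟩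
  · rw [closure_setOfPred_re_lt]
    exact sdiff_subset

theorem tendsto_intervalIntegral_rpow_mul_cexp {s : ℝ} (hs₀ : 0 < s) (hs₁ : s < 1) {c : ℂ}
    (hc₀ : c ≠ 0) (hc : c.re ≤ 0) :
    Tendsto (fun R : ℝ => ∫ t in (0 : ℝ)..R, ((t ^ (s - 1) : ℝ) : ℂ) * cexp (c * t)) atTop
      (𝓝 ((-c) ^ (-s : ℂ) * Real.Gamma s)) :=
  improperRpowCexpIntegral_eq hs₀ hs₁ hc₀ hc ▸
    tendsto_intervalIntegral_improperRpowCexpIntegral hs₀ hs₁ hc₀ hc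

lemma neg_I_mul_cpow_neg {x : ℝ} (hx : 0 < x) (s : ℝ) :
    (-(I * x)) ^ (-s : ℂ) = ((x ^ (-s) : ℝ) : ℂ) * cexp (I * ↑(π * s / 2)) := by
  rw [show -(I * x) = x * -I by ring, cpow_def_of_ne_zero (by simp [hx.ne']),
    log_ofReal_mul hx (neg_ne_zero.2 I_ne_zero), log_neg_I, rpow_def_of_pos hx, ofReal_exp,
    ← Complex.exp_add]
  push_cast
  ring_nf

lemma re_ofReal_mul_cexp_I_mul (a b : ℝ) : (a * cexp (I * b)).re = a * Real.cos b := by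
  rw [re_ofReal_mul, mul_comm I, exp_ofReal_mul_I_re]

lemma im_ofReal_mul_cexp_I_mul (a b : ℝ) : (a * cexp (I * b)).im = a * Real.sin b := by
  rw [im_ofReal_mul, mul_comm I, exp_ofReal_mul_I_im]

theorem tendsto_intervalIntegral_rpow_mul_cexp_I_mul {s : ℝ} (hs₀ : 0 < s) (hs₁ : s < 1) {x : ℝ}
    (hx : 0 < x) :
    Tendsto (fun R : ℝ => ∫ t in (0 : ℝ)..R, ((t ^ (s - 1) : ℝ) : ℂ) * cexp (I * x * t)) atTop
      (𝓝 (↑(x ^ (-s) * Real.Gamma s) * cexp (I * ↑(π * s / 2)))) := by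
  have hI : I * (x : ℂ) ≠ 0 := mul_ne_zero I_ne_zero (ofReal_ne_zero.2 hx.ne')
  have h := tendsto_intervalIntegral_rpow_mul_cexp hs₀ hs₁ hI (by simp)
  rw [neg_I_mul_cpow_neg hx] at h
  convert h using 2
  push_cast
  ring

theorem tendsto_intervalIntegral_rpow_mul_cos {s : ℝ} (hs₀ : 0 < s) (hs₁ : s < 1) {x : ℝ}
    (hx : 0 < x) :
    Tendsto (fun R : ℝ => ∫ t in (0 : ℝ)..R, t ^ (s - 1) * Real.cos (x * t)) atTop
      (𝓝 (x ^ (-s) * Real.Gamma s * Real.cos (π * s / 2))) := by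
  have h := (continuous_re.tendsto _).comp (tendsto_intervalIntegral_rpow_mul_cexp_I_mul hs₀ hs₁ hx)
  rw [Function.comp_def, re_ofReal_mul_cexp_I_mul] at h
  refine h.congr fun R => ?_
  rw [← reCLM_apply, ← ContinuousLinearMap.intervalIntegral_comp_comm _
    (intervalIntegrable_rpow_mul_cexp (by linarith) _ 0 R)]
  simp only [reCLM_apply, mul_assoc I, ← ofReal_mul, re_ofReal_mul_cexp_I_mul]

theorem tendsto_intervalIntegral_rpow_mul_sin {s : ℝ} (hs₀ : 0 < s) (hs₁ : s < 1) {x : ℝ}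
    (hx : 0 < x) :
    Tendsto (fun R : ℝ => ∫ t in (0 : ℝ)..R, t ^ (s - 1) * Real.sin (x * t)) atTop
      (𝓝 (x ^ (-s) * Real.Gamma s * Real.sin (π * s / 2))) := by
  have h := (continuous_im.tendsto _).comp (tendsto_intervalIntegral_rpow_mul_cexp_I_mul hs₀ hs₁ hx)
  rw [Function.comp_def, im_ofReal_mul_cexp_I_mul] at h
  refine h.congr fun R => ?_
  rw [← imCLM_apply, ← ContinuousLinearMap.intervalIntegral_comp_comm _
    (intervalIntegrable_rpow_mul_cexp (by linarith) _ 0 R)]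
  simp only [imCLM_apply, mul_assoc I, ← ofReal_mul, im_ofReal_mul_cexp_I_mul]

lemma cexp_half_mul_cos_sin_combination (μ : ℝ) :
    cexp (I * π * μ / 2) * ((1 - cexp (I * π * (μ - 1))) * Real.cos (π * μ / 2) +
      I * (1 + cexp (I * π * (μ - 1))) * Real.sin (π * μ / 2)) = 2 * cexp (I * π * μ) := by
  have hw : cexp (I * π * μ / 2) = Real.cos (π * μ / 2) + Real.sin (π * μ / 2) * I := by
    rw [show I * π * μ / 2 = ((π * μ / 2 : ℝ) : ℂ) * I by push_cast; ring, exp_mul_I,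
      ← ofReal_cos, ← ofReal_sin]
  have hw' : cexp (-(I * π * μ / 2)) = Real.cos (π * μ / 2) - Real.sin (π * μ / 2) * I := by
    rw [show -(I * π * μ / 2) = -((π * μ / 2 : ℝ) : ℂ) * I by push_cast; ring, exp_mul_I,
      Complex.cos_neg, Complex.sin_neg, ← ofReal_cos, ← ofReal_sin]
    ring
  have hww' : cexp (I * π * μ / 2) * cexp (-(I * π * μ / 2)) = 1 := by
    rw [← Complex.exp_add, add_neg_cancel, Complex.exp_zero]
  have hsq : cexp (I * π * μ) = cexp (I * π * μ / 2) ^ 2 := by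
    rw [sq, ← Complex.exp_add]
    ring_nf
  have hA : cexp (I * π * (μ - 1)) = -cexp (I * π * μ / 2) ^ 2 := by
    rw [mul_sub, mul_one, Complex.exp_sub, hsq, mul_comm I, exp_pi_mul_I]
    ring
  rw [hA, hsq]
  set w := cexp (I * π * μ / 2)
  linear_combination w ^ 2 * hww' - w * hw - w ^ 3 * hw'

/-- For `0 < μ < 1` and real `z₀ > 0`, the derivative side of the generalised root
identity for `f(z) = z` converges, as `R → ∞`, to the root side `e^(iπμ) z₀^(-μ)`. -/
theorem root_identity_id_fn (μ z₀ : ℝ) (hμ0 : 0 < μ) (hμ1 : μ < 1) (hz₀ : 0 < z₀) :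
    Tendsto
      (fun R : ℝ =>
        (Complex.exp (Complex.I * π * μ / 2) / (2 * (Real.Gamma μ : ℂ))) *
          ((1 - Complex.exp (Complex.I * π * (μ - 1))) *
              ((∫ ξ in (0:ℝ)..R, ξ ^ (μ - 1) * Real.cos (z₀ * ξ)) : ℝ) +
            Complex.I * (1 + Complex.exp (Complex.I * π * (μ - 1))) *
              ((∫ ξ in (0:ℝ)..R, ξ ^ (μ - 1) * Real.sin (z₀ * ξ)) : ℝ)))
      atTop (nhds (Complex.exp (Complex.I * π * μ) * ((z₀ ^ (-μ) : ℝ) : ℂ))) := by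
  have hcos := (tendsto_intervalIntegral_rpow_mul_cos hμ0 hμ1 hz₀).ofReal
  have hsin := (tendsto_intervalIntegral_rpow_mul_sin hμ0 hμ1 hz₀).ofReal
  convert ((hcos.const_mul _).add (hsin.const_mul _)).const_mul _ using 2
  have hΓ : (Real.Gamma μ : ℂ) ≠ 0 := ofReal_ne_zero.2 (Real.Gamma_pos_of_pos hμ0).ne'
  rw [div_mul_eq_mul_div, eq_div_iff (mul_ne_zero two_ne_zero hΓ)]
  simp only [ofReal_mul]
  linear_combination
    ((z₀ ^ (-μ) : ℝ) * Real.Gamma μ : ℂ) * (cexp_half_mul_cos_sin_combination μ).symm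
end

section
/- For every real μ with −1 < μ < 0 and every real x > −1, the sequence k ↦ ∑_{j=1}^k (x+j)^{−μ} − (x+k)^{1−μ}/(1−μ) − (1/2)·(x+k)^{−μ} converges to a (finite real) limit as k → ∞. (This limit gives the Cesaro-regularised root side r_Γ(x,μ) = −e^{iπμ}·lim for the function Γ(z+1) in the range −1 < μ < 0.) -/
/-!
With `p = -μ ∈ (0, 1)`, each increment of the sequence is the trapezoid rule for `∫ t ^ p` over
`[x + k, x + k + 1]` minus that integral. Since `t ^ p` is concave, the trapezoid rule undershoots
the integral, so the sequence decreases; and the integral is at most the midpoint rule, which the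
tangent lines at the two end points bound by the trapezoid rule plus the telescoping difference
`p (x + k) ^ (p - 1) / 4 - p (x + k + 1) ^ (p - 1) / 4`. Hence the sequence is also bounded below.
-/

open Real Filter Finset

open Set intervalIntegral

theorem integral_affine (α β c a b : ℝ) :
    ∫ t in a..b, (α + β * (t - c)) = (b - a) * (α + β * ((a + b) / 2 - c)) := by
  rw [intervalIntegral.integral_add intervalIntegrable_const
    ((by fun_prop : Continuous fun t => β * (t - c)).intervalIntegrable a b),
    intervalIntegral.integral_const_mul, intervalIntegral.integral_sub intervalIntegrable_id
      intervalIntegrable_const, integral_id, intervalIntegral.integral_const,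
    intervalIntegral.integral_const, smul_eq_mul, smul_eq_mul]
  ring

theorem ConcaveOn.mul_trapezoid_le_integral {f : ℝ → ℝ} {a b : ℝ} (hab : a ≤ b)
    (hf : ConcaveOn ℝ (Icc a b) f) (hfi : IntervalIntegrable f MeasureTheory.volume a b) :
    (b - a) * ((f a + f b) / 2) ≤ ∫ t in a..b, f t := by
  rcases hab.eq_or_lt with rfl | hlt
  · simp
  have hchord : ∀ t ∈ Icc a b, f a + (f b - f a) / (b - a) * (t - a) ≤ f t := by
    intro t ht
    set θ := (t - a) / (b - a) with hθ
    have hθ0 : 0 ≤ θ := div_nonneg (sub_nonneg.mpr ht.1) (sub_pos.mpr hlt).le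
    have hθ1 : θ ≤ 1 := (div_le_one (sub_pos.mpr hlt)).mpr (by linarith [ht.2])
    have key := hf.2 (left_mem_Icc.mpr hab) (right_mem_Icc.mpr hab) (sub_nonneg.mpr hθ1) hθ0
      (sub_add_cancel 1 θ)
    have hpt : (1 - θ) • a + θ • b = t := by
      rw [smul_eq_mul, smul_eq_mul, hθ]; field_simp [(sub_pos.mpr hlt).ne']; ring
    rw [hpt, smul_eq_mul, smul_eq_mul] at key
    calc f a + (f b - f a) / (b - a) * (t - a) = (1 - θ) * f a + θ * f b := by ring
      _ ≤ f t := key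
  have := integral_mono_on hab (Continuous.intervalIntegrable (by fun_prop) a b) hfi hchord
  rw [integral_affine] at this
  convert this using 2
  field_simp [(sub_pos.mpr hlt).ne']
  ring

theorem ConcaveOn.integral_le_mul_midpoint {f : ℝ → ℝ} {a b : ℝ} (hab : a ≤ b)
    (hf : ConcaveOn ℝ (Icc a b) f) (hfi : IntervalIntegrable f MeasureTheory.volume a b) :
    ∫ t in a..b, f t ≤ (b - a) * f ((a + b) / 2) := by
  have hrefl : ∫ t in a..b, f (a + b - t) = ∫ t in a..b, f t := by
    simp [integral_comp_sub_left f (a + b)]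
  have hrefli : IntervalIntegrable (fun t => f (a + b - t)) MeasureTheory.volume a b := by
    simpa using (hfi.comp_sub_left (a + b)).symm
  have hpair : ∀ t ∈ Icc a b, f t + f (a + b - t) ≤ 2 * f ((a + b) / 2) := by
    intro t ht
    have hr : a + b - t ∈ Icc a b := ⟨by linarith [ht.2], by linarith [ht.1]⟩
    have key := hf.2 ht hr (by norm_num : (0 : ℝ) ≤ 1 / 2) (by norm_num : (0 : ℝ) ≤ 1 / 2)
      (by norm_num)
    have hm : (1 / 2 : ℝ) • t + (1 / 2 : ℝ) • (a + b - t) = (a + b) / 2 := by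
      simp only [smul_eq_mul]; ring
    rw [hm, smul_eq_mul, smul_eq_mul] at key
    linarith
  have := integral_mono_on hab (hfi.add hrefli) intervalIntegrable_const hpair
  rw [intervalIntegral.integral_add hfi hrefli, hrefl, intervalIntegral.integral_const,
    smul_eq_mul] at this
  linarith

theorem rpow_le_tangent {p c t : ℝ} (hp0 : 0 ≤ p) (hp1 : p ≤ 1) (hc : 0 < c) (ht : 0 ≤ t) :
    t ^ p ≤ c ^ p + p * c ^ (p - 1) * (t - c) := by
  have hB := rpow_one_add_le_one_add_mul_self (s := t / c - 1)
    (by linarith [div_nonneg ht hc.le]) hp0 hp1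
  rw [add_sub_cancel, div_rpow ht hc.le, div_le_iff₀ (rpow_pos_of_pos hc p)] at hB
  rw [rpow_sub_one hc.ne']
  calc t ^ p ≤ (1 + p * (t / c - 1)) * c ^ p := hB
    _ = c ^ p + p * (c ^ p / c) * (t - c) := by field_simp

theorem rpow_midpoint_le {p a b : ℝ} (hp0 : 0 ≤ p) (hp1 : p ≤ 1) (ha : 0 < a) (hb : 0 < b) :
    ((a + b) / 2) ^ p ≤ (a ^ p + b ^ p) / 2 + p * (a ^ (p - 1) - b ^ (p - 1)) * (b - a) / 4 := by
  have hm : 0 ≤ (a + b) / 2 := by positivity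
  have h1 := rpow_le_tangent hp0 hp1 ha hm
  have h2 := rpow_le_tangent hp0 hp1 hb hm
  linarith

theorem exists_tendsto_of_antitone_of_monotone_sub {u w : ℕ → ℝ} (hu : Antitone u)
    (huw : Monotone (u - w)) (hw : ∀ n, 0 ≤ w n) : ∃ L, Tendsto u atTop (nhds L) := by
  refine ⟨⨅ n, u n, tendsto_atTop_ciInf hu ⟨u 0 - w 0, ?_⟩⟩
  rintro _ ⟨n, rfl⟩
  have := huw (Nat.zero_le n)
  simp only [Pi.sub_apply] at this
  linarith [hw n]

noncomputable def regularizedPowerSum (p x : ℝ) (k : ℕ) : ℝ :=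
  (∑ j ∈ Finset.Icc 1 k, (x + j) ^ p) - (x + k) ^ (1 + p) / (1 + p) - 1 / 2 * (x + k) ^ p

theorem regularizedPowerSum_succ_sub {p : ℝ} (hp : -1 < p) (x : ℝ) (k : ℕ) :
    regularizedPowerSum p x (k + 1) - regularizedPowerSum p x k =
      ((x + k) ^ p + (x + k + 1) ^ p) / 2 - ∫ t in (x + k)..(x + k + 1), t ^ p := by
  rw [integral_rpow (Or.inl hp), add_comm p 1]
  simp only [regularizedPowerSum, Finset.sum_Icc_succ_top (Nat.le_add_left 1 k)]
  push_cast
  ring_nf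

theorem regularizedPowerSum_succ_sub_mem_Icc {p x : ℝ} (hp0 : 0 ≤ p) (hp1 : p ≤ 1) {k : ℕ}
    (hk : 0 < x + k) :
    regularizedPowerSum p x (k + 1) - regularizedPowerSum p x k ∈
      Icc (-(p * ((x + k) ^ (p - 1) - (x + k + 1) ^ (p - 1)) / 4)) 0 := by
  set a : ℝ := x + k
  have hconc : ConcaveOn ℝ (Icc a (a + 1)) fun t => t ^ p :=
    (concaveOn_rpow hp0 hp1).subset (fun t ht => hk.le.trans ht.1) (convex_Icc _ _)
  have hint : IntervalIntegrable (fun t => t ^ p) MeasureTheory.volume a (a + 1) :=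
    intervalIntegral.intervalIntegrable_rpow' (by linarith)
  have htrap := hconc.mul_trapezoid_le_integral (by linarith) hint
  have hmid := hconc.integral_le_mul_midpoint (by linarith) hint
  have htan := rpow_midpoint_le hp0 hp1 hk (by linarith : 0 < a + 1)
  rw [regularizedPowerSum_succ_sub (by linarith)]
  simp only [add_sub_cancel_left, one_mul] at htrap hmid htan
  constructor <;> linarith

theorem exists_tendsto_regularizedPowerSum {p x : ℝ} (hp0 : 0 ≤ p) (hp1 : p ≤ 1) (hx : -1 < x) :
    ∃ L, Tendsto (regularizedPowerSum p x) atTop (nhds L) := by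
  have hpos (n : ℕ) : 0 < x + (n + 1 : ℕ) := by push_cast; linarith [n.cast_nonneg (α := ℝ)]
  set w : ℕ → ℝ := fun n => p * (x + (n + 1 : ℕ)) ^ (p - 1) / 4
  have hstep (n : ℕ) := regularizedPowerSum_succ_sub_mem_Icc hp0 hp1 (hpos n)
  obtain ⟨L, hL⟩ := exists_tendsto_of_antitone_of_monotone_sub
    (u := fun n => regularizedPowerSum p x (n + 1)) (w := w)
    (antitone_nat_of_succ_le fun n => by linarith [(hstep n).2])
    (monotone_nat_of_le_succ fun n => by
      have := (hstep n).1
      simp only [Pi.sub_apply, w, Nat.cast_succ, add_assoc] at this ⊢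
      linarith)
    (fun n => by have := (hpos n).le; positivity)
  exact ⟨L, (tendsto_add_atTop_iff_nat 1).mp hL⟩

/-- For `-1 < μ < 0` and `x > -1`, the regularised partial sums
`∑_{j=1}^k (x+j)^(-μ) - (x+k)^(1-μ)/(1-μ) - (1/2)(x+k)^(-μ)` converge to a finite limit. -/
theorem gamma_root_side_converges_neg (μ x : ℝ) (hμ0 : -1 < μ) (hμ1 : μ < 0) (hx : -1 < x) :
    ∃ L : ℝ,
      Tendsto
        (fun k : ℕ =>
          (∑ j ∈ Finset.Icc 1 k, (x + (j : ℝ)) ^ (-μ)) -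
            (x + (k : ℝ)) ^ (1 - μ) / (1 - μ) -
            (1 / 2) * (x + (k : ℝ)) ^ (-μ))
        atTop (nhds L) := by
  rw [sub_eq_add_neg 1 μ]
  show ∃ L, Tendsto (regularizedPowerSum (-μ) x) atTop (nhds L)
  exact exists_tendsto_regularizedPowerSum (by linarith) (by linarith) hx
end

section
/- For every real s₀ > 1 and every real μ with −1 < μ < 0, the sequence k ↦ ∑_{j=1}^k (s₀+2j)^{−μ} − (1/2)·(s₀+2k)^{1−μ}/(1−μ) − (1/2)·(s₀+2k)^{−μ} converges to a (finite real) limit as k → ∞. (This limit gives the regularised trivial-zero contribution r_T(s₀,μ) = e^{iπμ}·lim to the root side of the generalised root identities for ζ in the range −1 < μ < 0.) -/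
/-!
With `f x = (s₀ + 2x)^(-μ)` and `F x = (s₀ + 2x)^(1-μ) / (2(1-μ))`, so that `F' = f`, the
sequence is `A k = ∑_{j=1}^k f j - F k - f k / 2`, and
`A (k+1) - A k = (f k + f (k+1)) / 2 - ∫_k^{k+1} f`.
As `0 < -μ < 1`, `f` is concave with an antitone, nonnegative derivative `f'`. The chord over
`[k, k+1]` lies below the graph, so `A` is antitone. The tangent at `k` lies above it and
`f (k+1) - f k ≥ f' (k+1)`, so `A k - f' k / 2` is monotone and `A k ≥ A 0 - f' 0 / 2`.
-/

open Real Filter Finset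

theorem integral_add_mul_sub (a b c m : ℝ) :
    ∫ x in a..b, (c + m * (x - a)) = (b - a) * c + m * (b - a) ^ 2 / 2 := by
  have hlin : IntervalIntegrable (fun x => m * (x - a)) MeasureTheory.volume a b :=
    Continuous.intervalIntegrable (by fun_prop) _ _
  rw [intervalIntegral.integral_add intervalIntegrable_const hlin,
    intervalIntegral.integral_const_mul, intervalIntegral.integral_comp_sub_right (fun x => x),
    integral_id, intervalIntegral.integral_const, smul_eq_mul]
  ring

namespace ConcaveOn

variable {f : ℝ → ℝ} {a b : ℝ}

theorem trapezoid_le_integral (hf : ConcaveOn ℝ (Set.Icc a b) f)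
    (hfi : IntervalIntegrable f MeasureTheory.volume a b) (hab : a ≤ b) :
    (b - a) * (f a + f b) / 2 ≤ ∫ x in a..b, f x := by
  rcases hab.eq_or_lt with rfl | hab
  · simp
  have hchord : ∀ x ∈ Set.Icc a b, f a + slope f a b * (x - a) ≤ f x := by
    rintro x ⟨hax, hxb⟩
    rcases hax.eq_or_lt with rfl | hax
    · simp
    have hslope : slope f a b ≤ slope f a x :=
      hf.slope_anti (Set.left_mem_Icc.2 hab.le) ⟨⟨hax.le, hxb⟩, hax.ne'⟩
        ⟨Set.right_mem_Icc.2 hab.le, hab.ne'⟩ hxb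
    rw [slope_def_field f a x, le_div_iff₀ (sub_pos.2 hax)] at hslope
    linarith
  calc (b - a) * (f a + f b) / 2 = (b - a) * f a + slope f a b * (b - a) ^ 2 / 2 := by
        rw [slope_def_field]; field_simp; ring
    _ = ∫ x in a..b, (f a + slope f a b * (x - a)) := (integral_add_mul_sub ..).symm
    _ ≤ ∫ x in a..b, f x :=
        intervalIntegral.integral_mono_on hab.le (Continuous.intervalIntegrable (by fun_prop) _ _)
          hfi hchord

theorem integral_le_tangent {d : ℝ} (hf : ConcaveOn ℝ (Set.Icc a b) f)
    (hfi : IntervalIntegrable f MeasureTheory.volume a b) (hab : a ≤ b) (hd : HasDerivAt f d a) :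
    ∫ x in a..b, f x ≤ (b - a) * f a + d * (b - a) ^ 2 / 2 := by
  have htangent : ∀ x ∈ Set.Icc a b, f x ≤ f a + d * (x - a) := by
    rintro x ⟨hax, hxb⟩
    rcases hax.eq_or_lt with rfl | hax
    · simp
    have hslope := hf.slope_le_of_hasDerivAt (Set.left_mem_Icc.2 hab) ⟨hax.le, hxb⟩ hax hd
    rw [slope_def_field, div_le_iff₀ (sub_pos.2 hax)] at hslope
    linarith
  calc ∫ x in a..b, f x ≤ ∫ x in a..b, (f a + d * (x - a)) :=
        intervalIntegral.integral_mono_on hab hfi (Continuous.intervalIntegrable (by fun_prop) _ _)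
          htangent
    _ = (b - a) * f a + d * (b - a) ^ 2 / 2 := integral_add_mul_sub ..

end ConcaveOn

noncomputable def trapezoidRemainder (f F : ℝ → ℝ) (k : ℕ) : ℝ :=
  ∑ j ∈ Icc 1 k, f j - F k - f k / 2

theorem trapezoidRemainder_succ_sub (f F : ℝ → ℝ) (k : ℕ) :
    trapezoidRemainder f F (k + 1) - trapezoidRemainder f F k =
      (f k + f (k + 1)) / 2 - (F (k + 1) - F k) := by
  simp only [trapezoidRemainder, sum_Icc_succ_top (Nat.le_add_left 1 k), Nat.cast_succ]
  ring

section AntitoneDeriv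

variable {f f' F : ℝ → ℝ}

theorem concaveOn_Ici_of_hasDerivAt (hf : ∀ x, 0 ≤ x → HasDerivAt f (f' x) x)
    (hf' : AntitoneOn f' (Set.Ici 0)) : ConcaveOn ℝ (Set.Ici 0) f := by
  refine AntitoneOn.concaveOn_of_deriv (convex_Ici 0)
    (fun x hx => (hf x hx).continuousAt.continuousWithinAt) ?_ ?_ <;> rw [interior_Ici]
  · exact fun x hx => (hf x (le_of_lt hx)).differentiableAt.differentiableWithinAt
  · intro x hx y hy hxy
    rw [(hf x (le_of_lt hx)).deriv, (hf y (le_of_lt hy)).deriv]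
    exact hf' (Set.mem_Ici.2 (le_of_lt hx)) (Set.mem_Ici.2 (le_of_lt hy)) hxy

theorem intervalIntegrable_of_hasDerivAt_Ici (hf : ∀ x, 0 ≤ x → HasDerivAt f (f' x) x)
    {a b : ℝ} (ha : 0 ≤ a) (hab : a ≤ b) : IntervalIntegrable f MeasureTheory.volume a b :=
  ContinuousOn.intervalIntegrable_of_Icc hab fun x hx =>
    (hf x (ha.trans hx.1)).continuousAt.continuousWithinAt

theorem integral_eq_sub_of_hasDerivAt_Ici (hf : ∀ x, 0 ≤ x → HasDerivAt f (f' x) x)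
    (hF : ∀ x, 0 ≤ x → HasDerivAt F (f x) x) {a b : ℝ} (ha : 0 ≤ a) (hab : a ≤ b) :
    ∫ x in a..b, f x = F b - F a :=
  intervalIntegral.integral_eq_sub_of_hasDerivAt
    (fun x hx => hF x (ha.trans (Set.uIcc_of_le hab ▸ hx).1))
    (intervalIntegrable_of_hasDerivAt_Ici hf ha hab)

theorem trapezoid_le_sub_of_hasDerivAt_Ici (hf : ∀ x, 0 ≤ x → HasDerivAt f (f' x) x)
    (hF : ∀ x, 0 ≤ x → HasDerivAt F (f x) x) (hf' : AntitoneOn f' (Set.Ici 0)) {a : ℝ}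
    (ha : 0 ≤ a) :
    (f a + f (a + 1)) / 2 ≤ F (a + 1) - F a := by
  have hconc := (concaveOn_Ici_of_hasDerivAt hf hf').subset
    (Set.Icc_subset_Ici_self.trans (Set.Ici_subset_Ici.2 ha)) (convex_Icc a (a + 1))
  have := hconc.trapezoid_le_integral (intervalIntegrable_of_hasDerivAt_Ici hf ha (by linarith))
    (by linarith)
  rw [integral_eq_sub_of_hasDerivAt_Ici hf hF ha (by linarith)] at this
  linarith

theorem sub_le_add_half_deriv_of_hasDerivAt_Ici (hf : ∀ x, 0 ≤ x → HasDerivAt f (f' x) x)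
    (hF : ∀ x, 0 ≤ x → HasDerivAt F (f x) x) (hf' : AntitoneOn f' (Set.Ici 0)) {a : ℝ}
    (ha : 0 ≤ a) :
    F (a + 1) - F a ≤ f a + f' a / 2 := by
  have hconc := (concaveOn_Ici_of_hasDerivAt hf hf').subset
    (Set.Icc_subset_Ici_self.trans (Set.Ici_subset_Ici.2 ha)) (convex_Icc a (a + 1))
  have := hconc.integral_le_tangent (intervalIntegrable_of_hasDerivAt_Ici hf ha (by linarith))
    (by linarith) (hf a ha)
  rw [integral_eq_sub_of_hasDerivAt_Ici hf hF ha (by linarith)] at this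
  linarith

theorem deriv_le_sub_of_hasDerivAt_Ici (hf : ∀ x, 0 ≤ x → HasDerivAt f (f' x) x)
    (hf' : AntitoneOn f' (Set.Ici 0)) {a : ℝ} (ha : 0 ≤ a) :
    f' (a + 1) ≤ f (a + 1) - f a := by
  have ha₁ : (0 : ℝ) ≤ a + 1 := by linarith
  have := (concaveOn_Ici_of_hasDerivAt hf hf').le_slope_of_hasDerivAt (Set.mem_Ici.2 ha)
    (Set.mem_Ici.2 ha₁) (lt_add_one a) (hf (a + 1) ha₁)
  simpa [slope_def_field] using this

theorem trapezoidRemainder_antitone (hf : ∀ x, 0 ≤ x → HasDerivAt f (f' x) x)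
    (hF : ∀ x, 0 ≤ x → HasDerivAt F (f x) x) (hf' : AntitoneOn f' (Set.Ici 0)) :
    Antitone (trapezoidRemainder f F) := by
  refine antitone_nat_of_succ_le fun k => ?_
  have := trapezoid_le_sub_of_hasDerivAt_Ici hf hF hf' k.cast_nonneg
  linarith [trapezoidRemainder_succ_sub f F k]

theorem trapezoidRemainder_sub_half_deriv_monotone (hf : ∀ x, 0 ≤ x → HasDerivAt f (f' x) x)
    (hF : ∀ x, 0 ≤ x → HasDerivAt F (f x) x) (hf' : AntitoneOn f' (Set.Ici 0)) :
    Monotone fun k : ℕ => trapezoidRemainder f F k - f' k / 2 := by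
  refine monotone_nat_of_le_succ fun k => ?_
  have h₁ := sub_le_add_half_deriv_of_hasDerivAt_Ici hf hF hf' k.cast_nonneg
  have h₂ := deriv_le_sub_of_hasDerivAt_Ici hf hf' k.cast_nonneg
  push_cast
  linarith [trapezoidRemainder_succ_sub f F k]

theorem exists_tendsto_trapezoidRemainder (hf : ∀ x, 0 ≤ x → HasDerivAt f (f' x) x)
    (hF : ∀ x, 0 ≤ x → HasDerivAt F (f x) x) (hf' : AntitoneOn f' (Set.Ici 0))
    (hf'_bdd : BddBelow (f' '' Set.Ici 0)) :
    ∃ L, Tendsto (trapezoidRemainder f F) atTop (nhds L) := by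
  obtain ⟨C, hC⟩ := hf'_bdd
  refine ⟨_, tendsto_atTop_ciInf (trapezoidRemainder_antitone hf hF hf')
    ⟨trapezoidRemainder f F 0 - f' 0 / 2 + C / 2, ?_⟩⟩
  rintro _ ⟨k, rfl⟩
  have h₁ := trapezoidRemainder_sub_half_deriv_monotone hf hF hf' (Nat.zero_le k)
  have h₂ := hC ⟨k, Set.mem_Ici.2 k.cast_nonneg, rfl⟩
  push_cast at h₁
  linarith

end AntitoneDeriv

theorem hasDerivAt_add_two_mul_rpow {s x : ℝ} (p : ℝ) (hx : 0 < s + 2 * x) :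
    HasDerivAt (fun x => (s + 2 * x) ^ p) (2 * p * (s + 2 * x) ^ (p - 1)) x := by
  simpa using (((hasDerivAt_id x).const_mul 2).const_add s).rpow_const (p := p) (Or.inl hx.ne')

/-- For `s₀ > 1` and `-1 < μ < 0`, the regularised trivial-zero partial sums
`∑_{j=1}^k (s₀+2j)^(-μ) - (1/2)(s₀+2k)^(1-μ)/(1-μ) - (1/2)(s₀+2k)^(-μ)`
converge to a finite limit. -/
theorem zeta_trivial_root_side_converges_neg (s₀ μ : ℝ) (hs₀ : 1 < s₀)
    (hμ0 : -1 < μ) (hμ1 : μ < 0) :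
    ∃ L : ℝ,
      Tendsto
        (fun k : ℕ =>
          (∑ j ∈ Finset.Icc 1 k, (s₀ + 2 * (j : ℝ)) ^ (-μ)) -
            (1 / 2) * (s₀ + 2 * (k : ℝ)) ^ (1 - μ) / (1 - μ) -
            (1 / 2) * (s₀ + 2 * (k : ℝ)) ^ (-μ))
        atTop (nhds L) := by
  have hpos : ∀ x : ℝ, 0 ≤ x → 0 < s₀ + 2 * x := fun x hx => by linarith
  have hf := fun x hx => hasDerivAt_add_two_mul_rpow (-μ) (hpos x hx)
  have hF : ∀ x, 0 ≤ x → HasDerivAt (fun x => 1 / 2 * (s₀ + 2 * x) ^ (1 - μ) / (1 - μ))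
      ((s₀ + 2 * x) ^ (-μ)) x := fun x hx => by
    refine (((hasDerivAt_add_two_mul_rpow (1 - μ) (hpos x hx)).const_mul (1 / 2)).div_const
      (1 - μ)).congr_deriv ?_
    have : 1 - μ ≠ 0 := by linarith
    rw [sub_sub_cancel_left]
    field_simp
  have hf'_anti : AntitoneOn (fun x => 2 * -μ * (s₀ + 2 * x) ^ (-μ - 1)) (Set.Ici 0) :=
    fun x hx y _ hxy => mul_le_mul_of_nonneg_left
      (rpow_le_rpow_of_nonpos (hpos x hx) (by linarith) (by linarith)) (by linarith)
  have hf'_bdd : BddBelow ((fun x => 2 * -μ * (s₀ + 2 * x) ^ (-μ - 1)) '' Set.Ici 0) := by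
    refine ⟨0, ?_⟩
    rintro _ ⟨x, hx, rfl⟩
    exact mul_nonneg (by linarith) (rpow_nonneg (hpos x hx).le _)
  obtain ⟨L, hL⟩ := exists_tendsto_trapezoidRemainder hf hF hf'_anti hf'_bdd
  refine ⟨L, hL.congr fun k => ?_⟩
  simp only [trapezoidRemainder]
  ring
end
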